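/- Let d ≥ 1, h ∈ ℝ, and v ∈ ℝ with v ≠ 0, sin(v) ≠ 0, cos(v/2) ≠ 0 and 2v + sin(2v) ≠ 0. Let H : ℝ^d → ℝ be continuously differentiable and B : ℝ^d → Matrix d d ℝ with B(y) skew-symmetric for every y. Suppose y₀, y₁ ∈ ℝ^d satisfy y₁ = y₀ + h·(2 sin(v/2)/v) · B( y₀ + (y₁ − y₀)/(2 cos(v/2)) ) · ∫₀¹ (4v·cos(v/2)·cos(vσ)/(2v + sin(2v))) · ∇H( y₀ + (sin(vσ)/sin(v))·(y₁ − y₀) ) dσ. Then H(y₁) = H(y₀). -/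

import Mathlib

/-!
Write `Δ = y₁ - y₀`. Along the path `σ ↦ y₀ + (sin (vσ) / sin v) • Δ`, which runs from `y₀` to
`y₁`, the fundamental theorem of calculus gives `H y₁ - H y₀ = (v / sin v) ⟪g, Δ⟫` with
`g = ∫₀¹ cos (vσ) • ∇H(y₀ + (sin (vσ) / sin v) • Δ) dσ`. The weight in the scheme is a constant
multiple of `cos (vσ)`, so the scheme says that `Δ` is a scalar multiple of `B g` for a
skew-symmetric matrix `B`, and `⟪g, B g⟫ = 0`.
-/

open Matrix

theorem Matrix.dotProduct_mulVec_self_eq_zero_of_transpose_eq_neg {R n : Type*} [Fintype n]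
    [CommRing R] [NoZeroDivisors R] [CharZero R] {A : Matrix n n R} (hA : Aᵀ = -A)
    (x : n → R) : x ⬝ᵥ A *ᵥ x = 0 := by
  have h : x ⬝ᵥ A *ᵥ x = -(x ⬝ᵥ A *ᵥ x) :=
    calc x ⬝ᵥ A *ᵥ x = Aᵀ *ᵥ x ⬝ᵥ x := by rw [dotProduct_mulVec, ← mulVec_transpose]
      _ = -(x ⬝ᵥ A *ᵥ x) := by rw [hA, neg_mulVec, neg_dotProduct, dotProduct_comm]
  exact CharZero.eq_neg_self_iff.mp h

section

variable {E : Type*} [NormedAddCommGroup E] [InnerProductSpace ℝ E] [CompleteSpace E]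

theorem ContDiff.continuous_gradient {H : E → ℝ} (hH : ContDiff ℝ 1 H) :
    Continuous (gradient H) :=
  (InnerProductSpace.toDual ℝ E).symm.continuous.comp (hH.continuous_fderiv one_ne_zero)

theorem sub_eq_inner_integral_gradient_smul {H : E → ℝ} (hH : ContDiff ℝ 1 H)
    {f f' : ℝ → ℝ} (hf : ∀ σ, HasDerivAt f (f' σ) σ) (hf' : Continuous f') (y Δ : E)
    (a b : ℝ) :
    H (y + f b • Δ) - H (y + f a • Δ) =
      inner ℝ (∫ σ in a..b, f' σ • gradient H (y + f σ • Δ)) Δ := by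
  set γ : ℝ → E := fun σ => y + f σ • Δ
  have hγ : Continuous γ :=
    continuous_const.add ((continuous_iff_continuousAt.2 fun σ => (hf σ).continuousAt).smul
      continuous_const)
  have hF : Continuous fun σ => f' σ • gradient H (γ σ) :=
    hf'.smul (hH.continuous_gradient.comp hγ)
  have hderiv : ∀ σ, HasDerivAt (fun σ => H (γ σ)) (inner ℝ (f' σ • gradient H (γ σ)) Δ) σ := by
    intro σ
    have := ((hH.differentiable one_ne_zero (γ σ)).hasGradientAt.hasFDerivAt).comp_hasDerivAt σ
      (((hf σ).smul_const Δ).const_add y)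
    refine this.congr_deriv ?_
    simp [inner_smul_left]
  calc H (γ b) - H (γ a) = ∫ σ in a..b, inner ℝ (f' σ • gradient H (γ σ)) Δ :=
        (intervalIntegral.integral_eq_sub_of_hasDerivAt (fun σ _ => hderiv σ)
          ((continuous_inner.comp (hF.prodMk continuous_const)).intervalIntegrable a b)).symm
    _ = inner ℝ (∫ σ in a..b, f' σ • gradient H (γ σ)) Δ := by
      simp only [real_inner_comm Δ, ← innerSL_apply_apply ℝ]
      exact (innerSL ℝ Δ).intervalIntegral_comp_comm
        (hF.intervalIntegrable (μ := MeasureTheory.volume) a b)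

end

theorem ffep1_energy_preservation_general
    (d : ℕ) (h v : ℝ)
    (hsin : Real.sin v ≠ 0)
    (H : EuclideanSpace ℝ (Fin d) → ℝ) (hH : ContDiff ℝ 1 H)
    (B : EuclideanSpace ℝ (Fin d) → Matrix (Fin d) (Fin d) ℝ)
    (hB : ∀ y, (B y)ᵀ = -(B y))
    (y₀ y₁ : EuclideanSpace ℝ (Fin d))
    (hy : y₁ = y₀ + (h * (2 * Real.sin (v / 2) / v)) • (WithLp.equiv 2 (Fin d → ℝ)).symm
      ((B (y₀ + (2 * Real.cos (v / 2))⁻¹ • (y₁ - y₀))).mulVec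
        (fun j => (∫ σ in (0:ℝ)..1,
          (4 * v * Real.cos (v / 2) * Real.cos (v * σ) / (2 * v + Real.sin (2 * v))) •
            gradient H (y₀ + (Real.sin (v * σ) / Real.sin v) • (y₁ - y₀))) j))) :
    H y₁ = H y₀ := by
  set g := ∫ σ in (0:ℝ)..1,
    Real.cos (v * σ) • gradient H (y₀ + (Real.sin (v * σ) / Real.sin v) • (y₁ - y₀))
  set A := B (y₀ + (2 * Real.cos (v / 2))⁻¹ • (y₁ - y₀))
  have hweights : ∫ σ in (0:ℝ)..1,
      (4 * v * Real.cos (v / 2) * Real.cos (v * σ) / (2 * v + Real.sin (2 * v))) •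
        gradient H (y₀ + (Real.sin (v * σ) / Real.sin v) • (y₁ - y₀)) =
      (4 * v * Real.cos (v / 2) / (2 * v + Real.sin (2 * v))) • g := by
    rw [← intervalIntegral.integral_smul]
    congr 1 with σ
    rw [smul_smul, mul_div_right_comm]
  have hstep : y₁ - y₀ = (h * (2 * Real.sin (v / 2) / v) *
      (4 * v * Real.cos (v / 2) / (2 * v + Real.sin (2 * v)))) • WithLp.toLp 2 (A *ᵥ g.ofLp) := by
    rw [sub_eq_of_eq_add' hy, hweights]
    change _ • WithLp.toLp 2 (A *ᵥ (_ • g).ofLp) = _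
    rw [WithLp.ofLp_smul, mulVec_smul, WithLp.toLp_smul, smul_smul]
  have henergy : H y₁ - H y₀ = v / Real.sin v * inner ℝ g (y₁ - y₀) := by
    have hf (σ : ℝ) : HasDerivAt (fun σ => Real.sin (v * σ) / Real.sin v)
        (v * Real.cos (v * σ) / Real.sin v) σ := by
      simpa [mul_comm] using ((hasDerivAt_id σ).const_mul v).sin.div_const (Real.sin v)
    have := sub_eq_inner_integral_gradient_smul hH hf (by fun_prop) y₀ (y₁ - y₀) 0 1
    simp_rw [mul_div_right_comm v, mul_smul] at this
    rw [intervalIntegral.integral_smul] at this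
    simpa [hsin, inner_smul_left] using this
  have hskew : inner ℝ g (WithLp.toLp 2 (A *ᵥ g.ofLp)) = 0 := by
    rw [EuclideanSpace.inner_eq_star_dotProduct, star_trivial, dotProduct_comm]
    exact dotProduct_mulVec_self_eq_zero_of_transpose_eq_neg (hB _) _
  rw [← sub_eq_zero, henergy, hstep, inner_smul_right, hskew, mul_zero, mul_zero]

/-- **Energy preservation of the trigonometrically-fitted scheme FFEP1 (Example 2).**
If `y₁ = y₀ + h (2 sin(v/2)/v) B(y₀ + (y₁−y₀)/(2cos(v/2)))
∫₀¹ (4v cos(v/2) cos(vσ)/(2v + sin 2v)) ∇H(y₀ + (sin(vσ)/sin v)(y₁−y₀)) dσ`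
with `B(y)` skew-symmetric, then `H(y₁) = H(y₀)`. -/
theorem ffep1_energy_preservation
    (d : ℕ) (hd : 1 ≤ d) (h v : ℝ)
    (hv : v ≠ 0) (hsin : Real.sin v ≠ 0) (hcos : Real.cos (v / 2) ≠ 0)
    (hden : 2 * v + Real.sin (2 * v) ≠ 0)
    (H : EuclideanSpace ℝ (Fin d) → ℝ) (hH : ContDiff ℝ 1 H)
    (B : EuclideanSpace ℝ (Fin d) → Matrix (Fin d) (Fin d) ℝ)
    (hB : ∀ y, (B y)ᵀ = -(B y))
    (y₀ y₁ : EuclideanSpace ℝ (Fin d))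
    (hy : y₁ = y₀ + (h * (2 * Real.sin (v / 2) / v)) • (WithLp.equiv 2 (Fin d → ℝ)).symm
      ((B (y₀ + (2 * Real.cos (v / 2))⁻¹ • (y₁ - y₀))).mulVec
        (fun j => (∫ σ in (0:ℝ)..1,
          (4 * v * Real.cos (v / 2) * Real.cos (v * σ) / (2 * v + Real.sin (2 * v))) •
            gradient H (y₀ + (Real.sin (v * σ) / Real.sin v) • (y₁ - y₀))) j))) :
    H y₁ = H y₀ :=
  ffep1_energy_preservation_general d h v hsin H hH B hB y₀ y₁ hy
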